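/- Let λ and μ be partitions of n with K_{λμ} = 1, ℓ(λ) = h, ℓ(μ) = l, μ_{h+1} < μ_h, and μ_h > 1. Define λ* by λ*_i = λ_i − 1 for 1 ≤ i ≤ h, and μ* by μ*_i = μ_i − 1 for 1 ≤ i ≤ h and μ*_i = μ_i for i > h. Then λ* and μ* are partitions of n − h and K_{λ* μ*} = 1. -/

import Mathlib

/-- A partition encoded as a weakly decreasing, finitely supported function `ℕ → ℕ`
(0-indexed: `l 0` is the first part). -/
def IsPartition (l : ℕ → ℕ) : Prop :=
  Antitone l ∧ ∃ N, ∀ i, N ≤ i → l i = 0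

/-- The size (sum of the parts). -/
noncomputable def psize (l : ℕ → ℕ) : ℕ := ∑ᶠ i, l i

/-- Dominance order: every partial sum of `l` is at least that of `m`. -/
def Dominates (l m : ℕ → ℕ) : Prop :=
  ∀ k, ∑ i ∈ Finset.range k, m i ≤ ∑ i ∈ Finset.range k, l i

/-- `l` has exactly `h` (nonzero) parts. -/
def PartLength (l : ℕ → ℕ) (h : ℕ) : Prop :=
  (∀ i, i < h → 0 < l i) ∧ ∀ i, h ≤ i → l i = 0

/-- A semistandard Young tableau of shape `l`: positive entries in the cells
`(i, j)` with `j < l i`, zero outside, rows weakly increasing, columns strictly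
increasing. -/
def IsSSYT (l : ℕ → ℕ) (T : ℕ → ℕ → ℕ) : Prop :=
  (∀ i j, j < l i → 1 ≤ T i j) ∧
  (∀ i j, l i ≤ j → T i j = 0) ∧
  (∀ i j k, j ≤ k → k < l i → T i j ≤ T i k) ∧
  (∀ i i' j, i < i' → j < l i' → T i j < T i' j)

/-- The number of cells of `T` (inside shape `l`) with entry `m + 1`. -/
noncomputable def entryCount (l : ℕ → ℕ) (T : ℕ → ℕ → ℕ) (m : ℕ) : ℕ :=
  Set.ncard {p : ℕ × ℕ | p.2 < l p.1 ∧ T p.1 p.2 = m + 1}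

/-- `T` has weight `w`: the entry `m + 1` occurs `w m` times. -/
def HasWeight (l : ℕ → ℕ) (T : ℕ → ℕ → ℕ) (w : ℕ → ℕ) : Prop :=
  ∀ m, entryCount l T m = w m

/-- The Kostka number: the number of semistandard Young tableaux of shape `l`
and weight `w`. -/
noncomputable def kostka (l w : ℕ → ℕ) : ℕ :=
  Set.ncard {T : ℕ → ℕ → ℕ | IsSSYT l T ∧ HasWeight l T w}

/-!
A tableau of shape `λ` and weight `μ` exists iff `λ ⊵ μ`: an entry `≤ k` lies in the first
`k` rows, and conversely one peels off the cells for the largest entry as a horizontal strip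
and inducts. Lowering the first `h` parts of both `λ` and `μ` by one keeps `λ ⊵ μ`, so
`K_{λ*μ*} ≥ 1`. In the other direction, prepending the column `1, …, h` to a tableau of shape
`λ*` and weight `μ*` gives a tableau of shape `λ` and weight `μ`, injectively, so
`K_{λ*μ*} ≤ K_{λμ} = 1`.
-/

open Finset

lemma psize_eq_sum_range {f : ℕ → ℕ} {N : ℕ} (hN : ∀ i, N ≤ i → f i = 0) :
    psize f = ∑ i ∈ range N, f i := by
  refine finsum_eq_sum_of_support_subset f fun i hi => ?_
  by_contra hiN
  exact hi (hN i (by simpa using hiN))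

lemma lt_of_lt_apply {f : ℕ → ℕ} {N r c : ℕ} (hN : ∀ i, N ≤ i → f i = 0) (hc : c < f r) :
    r < N := by
  by_contra! hr
  simp [hN r hr] at hc

def cellsInRows (l : ℕ → ℕ) (k : ℕ) : Finset (ℕ × ℕ) :=
  (range k).biUnion fun r => {r} ×ˢ range (l r)

lemma mem_cellsInRows {l : ℕ → ℕ} {k : ℕ} {p : ℕ × ℕ} :
    p ∈ cellsInRows l k ↔ p.1 < k ∧ p.2 < l p.1 := by
  obtain ⟨r, c⟩ := p
  simp [cellsInRows]

lemma sum_cellsInRows {M : Type*} [AddCommMonoid M] (l : ℕ → ℕ) (k : ℕ) (f : ℕ × ℕ → M) :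
    ∑ p ∈ cellsInRows l k, f p = ∑ r ∈ range k, ∑ c ∈ range (l r), f (r, c) := by
  rw [cellsInRows, sum_biUnion]
  · simp
  · intro r _ r' _ hrr'
    simp [disjoint_left, Ne.symm hrr']

lemma card_cellsInRows (l : ℕ → ℕ) (k : ℕ) : #(cellsInRows l k) = ∑ r ∈ range k, l r := by
  rw [card_eq_sum_ones, sum_cellsInRows]
  simp

lemma cellsInRows_mono {l l' : ℕ → ℕ} (hll' : ∀ r, l r ≤ l' r) (k : ℕ) :
    cellsInRows l k ⊆ cellsInRows l' k := fun p hp => by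
  rw [mem_cellsInRows] at hp ⊢
  exact ⟨hp.1, hp.2.trans_le (hll' p.1)⟩

lemma entryCount_eq_card_filter {l : ℕ → ℕ} {N : ℕ} (hN : ∀ i, N ≤ i → l i = 0)
    (T : ℕ → ℕ → ℕ) (m : ℕ) :
    entryCount l T m = #{p ∈ cellsInRows l N | T p.1 p.2 = m + 1} := by
  rw [entryCount, ← Set.ncard_coe_finset]
  congr 1
  ext ⟨r, c⟩
  simp only [Set.mem_ofPred_eq, coe_filter, mem_cellsInRows]
  exact ⟨fun h => ⟨⟨lt_of_lt_apply hN h.1, h.1⟩, h.2⟩, fun h => ⟨h.1.2, h.2⟩⟩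

lemma entryCount_eq_sum {l : ℕ → ℕ} {N : ℕ} (hN : ∀ i, N ≤ i → l i = 0)
    (T : ℕ → ℕ → ℕ) (m : ℕ) :
    entryCount l T m = ∑ r ∈ range N, ∑ c ∈ range (l r), if T r c = m + 1 then 1 else 0 := by
  rw [entryCount_eq_card_filter hN, card_filter, sum_cellsInRows]

lemma IsSSYT.add_one_le {lam : ℕ → ℕ} {T : ℕ → ℕ → ℕ} (hT : IsSSYT lam T)
    (hanti : Antitone lam) {r c : ℕ} (hc : c < lam r) : r + 1 ≤ T r c := by
  induction r with
  | zero => exact hT.1 0 c hc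
  | succ r ih =>
    exact (ih (hc.trans_le (hanti r.le_succ))).trans_lt (hT.2.2.2 r (r + 1) c r.lt_succ_self hc)

lemma HasWeight.le_of_apply_eq_zero {lam w : ℕ → ℕ} {T : ℕ → ℕ → ℕ} {N b : ℕ}
    (hW : HasWeight lam T w) (hN : ∀ i, N ≤ i → lam i = 0) (hw : ∀ m, b ≤ m → w m = 0)
    {r c : ℕ} (hc : c < lam r) : T r c ≤ b := by
  by_contra! hb
  have hpos : 0 < entryCount lam T (T r c - 1) := by
    rw [entryCount_eq_card_filter hN, card_pos]
    refine ⟨(r, c), mem_filter.2 ⟨mem_cellsInRows.2 ⟨lt_of_lt_apply hN hc, hc⟩, ?_⟩⟩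
    show T r c = T r c - 1 + 1
    omega
  rw [hW, hw _ (by omega)] at hpos
  exact hpos.false

lemma dominates_of_isSSYT {lam mu : ℕ → ℕ} {T : ℕ → ℕ → ℕ} (hlam : IsPartition lam)
    (hT : IsSSYT lam T) (hW : HasWeight lam T mu) : Dominates lam mu := by
  obtain ⟨hanti, N, hN⟩ := hlam
  intro k
  let entries (m : ℕ) := {p ∈ cellsInRows lam N | T p.1 p.2 = m + 1}
  have hdisj : (range k : Set ℕ).PairwiseDisjoint entries := fun m _ m' _ hmm' =>
    disjoint_filter.2 fun p _ h h' => hmm' (by omega)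
  -- an entry `m + 1 ≤ k` can only occur in the first `k` rows
  have hsub : (range k).biUnion entries ⊆ cellsInRows lam k := by
    intro p hp
    obtain ⟨m, hm, hp⟩ := mem_biUnion.1 hp
    obtain ⟨hpN, hpT⟩ := mem_filter.1 hp
    have hc := (mem_cellsInRows.1 hpN).2
    have := hT.add_one_le hanti hc
    exact mem_cellsInRows.2 ⟨by simp at hm; omega, hc⟩
  calc ∑ m ∈ range k, mu m = ∑ m ∈ range k, #(entries m) :=
        sum_congr rfl fun m _ => by rw [← hW m, entryCount_eq_card_filter hN]
    _ = #((range k).biUnion entries) := (card_biUnion hdisj).symm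
    _ ≤ #(cellsInRows lam k) := card_le_card hsub
    _ = ∑ r ∈ range k, lam r := card_cellsInRows lam k

def stripColumn (h : ℕ) (f : ℕ → ℕ) : ℕ → ℕ := fun i => if i < h then f i - 1 else f i

lemma sum_range_stripColumn_add {h : ℕ} {f : ℕ → ℕ} (hf : ∀ i < h, 0 < f i) (k : ℕ) :
    ∑ i ∈ range k, stripColumn h f i + min k h = ∑ i ∈ range k, f i := by
  induction k with
  | zero => simp
  | succ k ih =>
    rw [sum_range_succ, sum_range_succ]
    rcases lt_or_ge k h with hk | hk
    · have : stripColumn h f k = f k - 1 := if_pos hk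
      have := hf k hk
      omega
    · have : stripColumn h f k = f k := if_neg hk.not_gt
      omega

lemma IsPartition.stripColumn {h : ℕ} {f : ℕ → ℕ} (hf : IsPartition f)
    (hstep : ∀ i < h, f h < f i) : IsPartition (stripColumn h f) := by
  obtain ⟨hanti, N, hN⟩ := hf
  refine ⟨antitone_nat_of_succ_le fun i => ?_, max N h, fun i hi => ?_⟩
  · have hmono : f (i + 1) ≤ f i := hanti (by omega)
    simp only [_root_.stripColumn]
    rcases lt_trichotomy (i + 1) h with hlt | rfl | hgt
    · rw [if_pos hlt, if_pos (by omega)]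
      omega
    · rw [if_neg (lt_irrefl _), if_pos i.lt_succ_self]
      exact Nat.le_sub_one_of_lt (hstep i i.lt_succ_self)
    · rw [if_neg (by omega), if_neg (by omega)]
      exact hmono
  · simp only [_root_.stripColumn, if_neg (show ¬i < h by omega)]
    exact hN i (le_of_max_le_left hi)

lemma psize_stripColumn {h : ℕ} {f : ℕ → ℕ} (hf : IsPartition f) (hpos : ∀ i < h, 0 < f i) :
    psize (stripColumn h f) = psize f - h := by
  obtain ⟨-, N, hN⟩ := hf
  have hNh : ∀ i, max N h ≤ i → f i = 0 := fun i hi => hN i (le_of_max_le_left hi)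
  have hNh' : ∀ i, max N h ≤ i → stripColumn h f i = 0 := fun i hi => by
    simp [_root_.stripColumn, hNh i hi]
  have := sum_range_stripColumn_add hpos (max N h)
  rw [psize_eq_sum_range hNh, psize_eq_sum_range hNh']
  omega

lemma Dominates.stripColumn {h : ℕ} {lam mu : ℕ → ℕ} (hdom : Dominates lam mu)
    (hlam : ∀ i < h, 0 < lam i) (hmu : ∀ i < h, 0 < mu i) :
    Dominates (stripColumn h lam) (stripColumn h mu) := fun k => by
  have := sum_range_stripColumn_add hlam k
  have := sum_range_stripColumn_add hmu k
  have := hdom k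
  omega

def IsHorizontalStrip (inner outer : ℕ → ℕ) : Prop :=
  ∀ r, inner r ≤ outer r ∧ outer (r + 1) ≤ inner r

lemma IsHorizontalStrip.antitone {inner outer : ℕ → ℕ} (hs : IsHorizontalStrip inner outer) :
    Antitone inner :=
  antitone_nat_of_succ_le fun r => (hs (r + 1)).1.trans (hs r).2

lemma IsHorizontalStrip.eq_zero {inner outer : ℕ → ℕ} (hs : IsHorizontalStrip inner outer)
    {N : ℕ} (hN : ∀ i, N ≤ i → outer i = 0) : ∀ i, N ≤ i → inner i = 0 := fun i hi =>
  Nat.eq_zero_of_le_zero ((hs i).1.trans (hN i hi).le)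

/-- Row `r` gives up as many cells as the maximal horizontal strip `λ / (λ 1, λ 2, …)` has in
row `r` within its first `s` columns; `min s (λ 0)` cells are removed in total. -/
def removeStrip (s : ℕ) (lam : ℕ → ℕ) : ℕ → ℕ :=
  fun r => lam r - min s (lam r) + min s (lam (r + 1))

lemma isHorizontalStrip_removeStrip {lam : ℕ → ℕ} (hanti : Antitone lam) (s : ℕ) :
    IsHorizontalStrip (removeStrip s lam) lam := fun r => by
  have : lam (r + 1) ≤ lam r := hanti r.le_succ
  simp only [removeStrip]
  omega

lemma sum_range_removeStrip_add (s : ℕ) (lam : ℕ → ℕ) (k : ℕ) :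
    ∑ r ∈ range k, removeStrip s lam r + min s (lam 0) = ∑ r ∈ range k, lam r + min s (lam k) := by
  induction k with
  | zero => simp
  | succ k ih =>
    rw [sum_range_succ, sum_range_succ]
    have : removeStrip s lam k + min s (lam k) = lam k + min s (lam (k + 1)) := by
      simp only [removeStrip]
      omega
    omega

lemma psize_removeStrip_add {lam : ℕ → ℕ} (hlam : IsPartition lam) {s : ℕ} (hs : s ≤ lam 0) :
    psize (removeStrip s lam) + s = psize lam := by
  obtain ⟨hanti, N, hN⟩ := hlam
  have := sum_range_removeStrip_add s lam N
  rw [hN N le_rfl, min_eq_left hs, min_eq_right (Nat.zero_le s)] at this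
  rw [psize_eq_sum_range hN,
    psize_eq_sum_range ((isHorizontalStrip_removeStrip hanti s).eq_zero hN)]
  omega

lemma sum_range_update_zero_add {f : ℕ → ℕ} {j k : ℕ} (hjk : j < k) :
    ∑ i ∈ range k, Function.update f j 0 i + f j = ∑ i ∈ range k, f i := by
  rw [sum_update_of_mem (mem_range.2 hjk), sum_eq_add_sum_sdiff_singleton_of_mem (mem_range.2 hjk),
    zero_add, add_comm]

lemma Dominates.removeStrip {lam mu : ℕ → ℕ} (hdom : Dominates lam mu) (hmu : Antitone mu)
    (j : ℕ) : Dominates (removeStrip (mu j) lam) (Function.update mu j 0) := fun k => by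
  have hkey := sum_range_removeStrip_add (mu j) lam k
  rcases lt_or_ge j k with hjk | hkj
  · have := sum_range_update_zero_add (f := mu) hjk
    have := hdom k
    omega
  · have hsum : ∑ i ∈ range k, Function.update mu j 0 i = ∑ i ∈ range k, mu i :=
      sum_congr rfl fun i hi => Function.update_of_ne (by simp at hi; omega) _ _
    have hmuk : mu j ≤ mu k := hmu hkj
    have := hdom k
    have := hdom (k + 1)
    rw [sum_range_succ, sum_range_succ] at this
    omega

lemma update_zero_eq_zero {f : ℕ → ℕ} {j : ℕ} (hf : ∀ i, j + 1 ≤ i → f i = 0) :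
    ∀ i, j ≤ i → Function.update f j 0 i = 0 := fun i hi => by
  rcases hi.eq_or_lt with rfl | hi
  · exact Function.update_self ..
  · rw [Function.update_of_ne hi.ne', hf i hi]

lemma Antitone.update_zero {f : ℕ → ℕ} (hf : Antitone f) {j : ℕ} (hfj : ∀ i, j + 1 ≤ i → f i = 0) :
    Antitone (Function.update f j 0) := fun a b hab => by
  rcases lt_or_ge b j with hb | hb
  · rw [Function.update_of_ne hb.ne, Function.update_of_ne (hab.trans_lt hb).ne]
    exact hf hab
  · rw [update_zero_eq_zero hfj b hb]
    exact Nat.zero_le _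

def fillStrip (inner outer : ℕ → ℕ) (T : ℕ → ℕ → ℕ) (v : ℕ) : ℕ → ℕ → ℕ :=
  fun r c => if c < inner r then T r c else if c < outer r then v + 1 else 0

section fillStrip

variable {inner outer : ℕ → ℕ} {T : ℕ → ℕ → ℕ} {v : ℕ}

lemma isSSYT_fillStrip (hs : IsHorizontalStrip inner outer) (houter : Antitone outer)
    (hT : IsSSYT inner T) (hv : ∀ r c, c < inner r → T r c ≤ v) :
    IsSSYT outer (fillStrip inner outer T v) := by
  refine ⟨fun r c hc => ?_, fun r c hc => ?_, fun r c c' hcc' hc' => ?_, fun r r' c hrr' hc => ?_⟩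
  · unfold fillStrip
    split_ifs with h
    exacts [hT.1 r c h, le_add_self]
  · have := (hs r).1
    simp only [fillStrip, if_neg (show ¬c < inner r by omega), if_neg (not_lt.2 hc)]
  · simp only [fillStrip, if_pos hc']
    by_cases h' : c' < inner r
    · rw [if_pos (hcc'.trans_lt h'), if_pos h']
      exact hT.2.2.1 r c c' hcc' h'
    · rw [if_neg h']
      split_ifs with h h₂
      exacts [(hv r c h).trans v.le_succ, le_rfl, absurd (hcc'.trans_lt hc') h₂]
  · have hc_inner : c < inner r := (hc.trans_le (houter hrr')).trans_le (hs r).2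
    have hc_outer : c < outer r' := hc
    simp only [fillStrip, if_pos hc_inner, if_pos hc_outer]
    split_ifs with h'
    · exact hT.2.2.2 r r' c hrr' h'
    · exact Nat.lt_succ_of_le (hv r c hc_inner)

lemma hasWeight_fillStrip (hs : IsHorizontalStrip inner outer) {N : ℕ}
    (hN : ∀ i, N ≤ i → outer i = 0) {w : ℕ → ℕ} (hW : HasWeight inner T w)
    (hv : ∀ r c, c < inner r → T r c ≤ v) :
    HasWeight outer (fillStrip inner outer T v)
      (Function.update w v (psize outer - psize inner)) := by
  have hN' := hs.eq_zero hN
  intro m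
  rw [entryCount_eq_card_filter hN]
  rcases eq_or_ne m v with rfl | hm
  · have hsub := cellsInRows_mono (fun r => (hs r).1) N
    have hstrip : {p ∈ cellsInRows outer N | fillStrip inner outer T m p.1 p.2 = m + 1}
        = cellsInRows outer N \ cellsInRows inner N := by
      ext ⟨r, c⟩
      simp only [mem_filter, mem_sdiff, mem_cellsInRows]
      simp only [fillStrip]
      constructor
      · rintro ⟨hc, hT'⟩
        split_ifs at hT' with h
        · exact absurd hT' (by have := hv r c h; omega)
        · exact ⟨hc, fun h' => h h'.2⟩
      · rintro ⟨hc, hc'⟩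
        have h : ¬c < inner r := fun h => hc' ⟨hc.1, h⟩
        rw [if_neg h, if_pos hc.2]
        exact ⟨hc, rfl⟩
    rw [hstrip, card_sdiff_of_subset hsub, card_cellsInRows, card_cellsInRows,
      ← psize_eq_sum_range hN, ← psize_eq_sum_range hN', Function.update_self]
  · rw [Function.update_of_ne hm, ← hW m, entryCount_eq_card_filter hN']
    congr 1
    ext ⟨r, c⟩
    simp only [mem_filter, mem_cellsInRows]
    simp only [fillStrip]
    constructor
    · rintro ⟨hc, hT'⟩
      split_ifs at hT' with h
      · exact ⟨⟨hc.1, h⟩, hT'⟩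
      · exact absurd hT' (by omega)
    · rintro ⟨hc, hT'⟩
      rw [if_pos hc.2]
      exact ⟨⟨hc.1, hc.2.trans_le (hs r).1⟩, hT'⟩

end fillStrip

lemma exists_isSSYT_of_dominates' (j : ℕ) :
    ∀ {lam mu : ℕ → ℕ}, IsPartition lam → Antitone mu → (∀ i, j ≤ i → mu i = 0) →
      psize lam = psize mu → Dominates lam mu → ∃ T, IsSSYT lam T ∧ HasWeight lam T mu := by
  induction j with
  | zero =>
    intro lam mu hlam _ hmu hsize _
    obtain ⟨-, N, hN⟩ := hlam
    have hlam0 : ∀ i, lam i = 0 := fun i => by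
      rcases lt_or_ge i N with hi | hi
      · rw [psize_eq_sum_range hN, psize_eq_sum_range hmu, sum_range_zero,
          sum_eq_zero_iff] at hsize
        exact hsize i (mem_range.2 hi)
      · exact hN i hi
    refine ⟨fun _ _ => 0, ⟨?_, fun _ _ _ => rfl, fun _ _ _ _ _ => le_rfl, ?_⟩, fun m => ?_⟩
    · simp [hlam0]
    · simp [hlam0]
    · simp [entryCount, hmu m (Nat.zero_le m)]
  | succ j ih =>
    intro lam mu hlam hmu hmuj hsize hdom
    -- strip off the cells that will carry the largest entry `j + 1`
    have hs := isHorizontalStrip_removeStrip hlam.1 (mu j)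
    have hmu0 : mu j ≤ lam 0 := (hmu (Nat.zero_le j)).trans (by simpa using hdom 1)
    have hinner := psize_removeStrip_add hlam hmu0
    have hmu' : psize (Function.update mu j 0) + mu j = psize mu := by
      rw [psize_eq_sum_range (N := j + 1) fun i hi => update_zero_eq_zero hmuj i (by omega),
        psize_eq_sum_range hmuj]
      exact sum_range_update_zero_add j.lt_succ_self
    obtain ⟨N, hN⟩ := hlam.2
    obtain ⟨T, hT, hW⟩ := ih ⟨hs.antitone, N, hs.eq_zero hN⟩ (hmu.update_zero hmuj)
      (update_zero_eq_zero hmuj) (by omega) (hdom.removeStrip hmu j)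
    have hv : ∀ r c, c < removeStrip (mu j) lam r → T r c ≤ j := fun r c hc =>
      hW.le_of_apply_eq_zero (hs.eq_zero hN) (update_zero_eq_zero hmuj) hc
    refine ⟨fillStrip (removeStrip (mu j) lam) lam T j, isSSYT_fillStrip hs hlam.1 hT hv, ?_⟩
    convert hasWeight_fillStrip hs hN hW hv using 1
    rw [Function.update_idem, show psize lam - psize (removeStrip (mu j) lam) = mu j by omega,
      Function.update_eq_self]

theorem exists_isSSYT_of_dominates {lam mu : ℕ → ℕ} (hlam : IsPartition lam)
    (hmu : IsPartition mu) (hsize : psize lam = psize mu) (hdom : Dominates lam mu) :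
    ∃ T, IsSSYT lam T ∧ HasWeight lam T mu :=
  exists_isSSYT_of_dominates' _ hlam hmu.1 hmu.2.choose_spec hsize hdom

def prependColumn (h : ℕ) (S : ℕ → ℕ → ℕ) : ℕ → ℕ → ℕ
  | r, 0 => if r < h then r + 1 else 0
  | r, c + 1 => if r < h then S r c else 0

section prependColumn

variable {lam : ℕ → ℕ} {h : ℕ} {S : ℕ → ℕ → ℕ}

lemma PartLength.lt_of_lt_apply (hlam : PartLength lam h) {r c : ℕ} (hc : c < lam r) : r < h :=
  _root_.lt_of_lt_apply hlam.2 hc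

lemma PartLength.stripColumn_add_one (hlam : PartLength lam h) {r : ℕ} (hr : r < h) :
    stripColumn h lam r + 1 = lam r := by
  have := hlam.1 r hr
  simp only [stripColumn, if_pos hr]
  omega

lemma PartLength.stripColumn_eq_zero (hlam : PartLength lam h) :
    ∀ i, h ≤ i → stripColumn h lam i = 0 := fun i hi => by
  simp [stripColumn, hi.not_gt, hlam.2 i hi]

lemma isSSYT_prependColumn (hlam : PartLength lam h) (hanti : Antitone (stripColumn h lam))
    (hS : IsSSYT (stripColumn h lam) S) : IsSSYT lam (prependColumn h S) := by
  have hstrip {r c : ℕ} (hr : r < h) : c + 1 < lam r ↔ c < stripColumn h lam r := by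
    rw [← hlam.stripColumn_add_one hr]
    omega
  refine ⟨fun r c hc => ?_, fun r c hc => ?_, fun r c c' hcc' hc' => ?_, fun r r' c hrr' hc => ?_⟩
  · have hr := hlam.lt_of_lt_apply hc
    rcases c with _ | c
    · simp [prependColumn, hr]
    · simpa [prependColumn, hr] using hS.1 r c ((hstrip hr).1 hc)
  · rcases lt_or_ge r h with hr | hr
    · obtain ⟨c, rfl⟩ : ∃ c', c = c' + 1 := Nat.exists_eq_add_one.2 ((hlam.1 r hr).trans_le hc)
      simpa [prependColumn, hr] using hS.2.1 r c (not_lt.1 fun h' => hc.not_gt ((hstrip hr).2 h'))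
    · cases c <;> simp [prependColumn, hr.not_gt]
  · have hr := hlam.lt_of_lt_apply hc'
    rcases c with _ | c <;> rcases c' with _ | c'
    · exact le_rfl
    · simpa [prependColumn, hr] using hS.add_one_le hanti ((hstrip hr).1 hc')
    · omega
    · simpa [prependColumn, hr] using hS.2.2.1 r c c' (by omega) ((hstrip hr).1 hc')
  · have hr' := hlam.lt_of_lt_apply hc
    rcases c with _ | c
    · simp [prependColumn, hr', hrr'.trans hr', hrr']
    · simpa [prependColumn, hr', hrr'.trans hr'] using hS.2.2.2 r r' c hrr' ((hstrip hr').1 hc)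

lemma hasWeight_prependColumn {mu : ℕ → ℕ} (hlam : PartLength lam h)
    (hmu : ∀ i < h, 0 < mu i) (hW : HasWeight (stripColumn h lam) S (stripColumn h mu)) :
    HasWeight lam (prependColumn h S) mu := by
  intro m
  have hrows : ∀ r ∈ range h,
      ∑ c ∈ range (lam r), (if prependColumn h S r c = m + 1 then 1 else 0)
        = ∑ c ∈ range (stripColumn h lam r), (if S r c = m + 1 then 1 else 0)
          + if m = r then 1 else 0 := fun r hr => by
    rw [mem_range] at hr
    rw [← hlam.stripColumn_add_one hr, sum_range_succ']
    simp [prependColumn, hr, eq_comm]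
  rw [entryCount_eq_sum hlam.2, sum_congr rfl hrows, sum_add_distrib, ← entryCount_eq_sum
    hlam.stripColumn_eq_zero, hW m, sum_ite_eq]
  have := hmu m
  simp only [mem_range, stripColumn]
  split_ifs <;> omega

lemma prependColumn_injOn {sh : ℕ → ℕ} {S S' : ℕ → ℕ → ℕ} (hsh : ∀ i, h ≤ i → sh i = 0)
    (hS : IsSSYT sh S) (hS' : IsSSYT sh S') (heq : prependColumn h S = prependColumn h S') :
    S = S' := by
  funext r c
  by_cases hc : c < sh r
  · simpa [prependColumn, lt_of_lt_apply hsh hc] using congrFun (congrFun heq r) (c + 1)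
  · rw [hS.2.1 r c (not_lt.1 hc), hS'.2.1 r c (not_lt.1 hc)]

end prependColumn

theorem stmt19_general (n h : ℕ) (lam mu : ℕ → ℕ)
    (hlp : IsPartition lam) (hln : psize lam = n)
    (hmp : IsPartition mu) (hmn : psize mu = n)
    (hk : kostka lam mu = 1)
    (hlh : PartLength lam h)
    (h1 : mu h < mu (h - 1)) :
    IsPartition (fun i => if i < h then lam i - 1 else lam i) ∧
    psize (fun i => if i < h then lam i - 1 else lam i) = n - h ∧
    IsPartition (fun i => if i < h then mu i - 1 else mu i) ∧
    psize (fun i => if i < h then mu i - 1 else mu i) = n - h ∧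
    kostka (fun i => if i < h then lam i - 1 else lam i)
        (fun i => if i < h then mu i - 1 else mu i) = 1 := by
  have hlam_step : ∀ i < h, lam h < lam i := fun i hi => by
    rw [hlh.2 h le_rfl]
    exact hlh.1 i hi
  have hmu_step : ∀ i < h, mu h < mu i := fun i hi => h1.trans_le (hmp.1 (by omega))
  have hmu_pos : ∀ i < h, 0 < mu i := fun i hi => (Nat.zero_le _).trans_lt (hmu_step i hi)
  have hlam_size : psize (stripColumn h lam) = n - h := by rw [psize_stripColumn hlp hlh.1, hln]
  have hmu_size : psize (stripColumn h mu) = n - h := by rw [psize_stripColumn hmp hmu_pos, hmn]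
  have hlp' := hlp.stripColumn hlam_step
  obtain ⟨T, hT⟩ := Set.ncard_eq_one.1 hk
  have hTmem : T ∈ {T | IsSSYT lam T ∧ HasWeight lam T mu} := hT ▸ Set.mem_singleton T
  have hdom := (dominates_of_isSSYT hlp hTmem.1 hTmem.2).stripColumn hlh.1 hmu_pos
  obtain ⟨S₀, hS₀⟩ := exists_isSSYT_of_dominates hlp' (hmp.stripColumn hmu_step)
    (hlam_size.trans hmu_size.symm) hdom
  have hprepend : ∀ S, IsSSYT (stripColumn h lam) S ∧
      HasWeight (stripColumn h lam) S (stripColumn h mu) → prependColumn h S = T := fun S hS =>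
    Set.mem_singleton_iff.1 <| hT ▸
      ⟨isSSYT_prependColumn hlh hlp'.1 hS.1, hasWeight_prependColumn hlh hmu_pos hS.2⟩
  refine ⟨hlp', hlam_size, hmp.stripColumn hmu_step, hmu_size, Set.ncard_eq_one.2 ⟨S₀, ?_⟩⟩
  refine Set.eq_singleton_iff_unique_mem.2 ⟨hS₀, fun S hS => ?_⟩
  exact prependColumn_injOn hlh.stripColumn_eq_zero hS.1 hS₀.1
    ((hprepend S hS).trans (hprepend S₀ hS₀).symm)

theorem stmt19 (n h l : ℕ) (lam mu : ℕ → ℕ)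
    (hlp : IsPartition lam) (hln : psize lam = n)
    (hmp : IsPartition mu) (hmn : psize mu = n)
    (hk : kostka lam mu = 1)
    (hlh : PartLength lam h) (hml : PartLength mu l)
    (h1 : mu h < mu (h - 1)) (h2 : 1 < mu (h - 1)) :
    IsPartition (fun i => if i < h then lam i - 1 else lam i) ∧
    psize (fun i => if i < h then lam i - 1 else lam i) = n - h ∧
    IsPartition (fun i => if i < h then mu i - 1 else mu i) ∧
    psize (fun i => if i < h then mu i - 1 else mu i) = n - h ∧
    kostka (fun i => if i < h then lam i - 1 else lam i)
        (fun i => if i < h then mu i - 1 else mu i) = 1 :=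
  stmt19_general n h lam mu hlp hln hmp hmn hk hlh h1
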